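/- For every m ∈ ℤ and p ≥ 1, G_m^{[p]} − (x₁/(1+βx₁))·G_{m−1}^{[p]} − (x₁/(1+βx₁))·β·G_m^{[p]} = G_m^{[p]}|_{x₁=0}, where x₁/(1+βx₁) = x₁·Σ_{s≥0}(−βx₁)^s ∈ R and f|_{x₁=0} denotes the result of substituting x₁ = 0 in f ∈ R. -/

import Mathlib

/- Common setup: `R = ℤ[β][[x₀,x₁,x₂,…]]` with `β = Polynomial.X`; only the
variables `x i` for `i ≥ 1` are used in the statements. -/

attribute [local instance] Classical.propDecidable

noncomputable section

abbrev A : Type := Polynomial ℤ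
abbrev R : Type := MvPowerSeries ℕ A

/-- the element β -/
def bR : R := MvPowerSeries.C (σ := ℕ) (R := A) Polynomial.X

/-- the variable `x i` -/
def Xv (i : ℕ) : R := MvPowerSeries.X i

/-- total degree of a monomial -/
def degSum (d : ℕ →₀ ℕ) : ℕ := d.sum fun _ n => n

/-- the ring automorphism `s i` exchanging `x i` and `x (i+1)` -/
def sOp (i : ℕ) (f : R) : R := fun d => f (Finsupp.equivMapDomain (Equiv.swap i (i+1)) d)

/-- the divided difference operator `π i`, characterized by
`(x i - x (i+1)) * π i f = (1 + β x (i+1)) f - (1 + β x i) (s i f)`. -/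
def ddiff (i : ℕ) (f : R) : R :=
  Classical.epsilon fun gq : R =>
    (Xv i - Xv (i+1)) * gq = (1 + bR * Xv (i+1)) * f - (1 + bR * Xv i) * sOp i f

/-- complete homogeneous symmetric function of degree `j` in the variables `x_q, …, x_p` -/
def hsym (q p : ℕ) (j : ℤ) : R := fun d =>
  if (∀ k ∈ d.support, q ≤ k ∧ k ≤ p) ∧ (degSum d : ℤ) = j then 1 else 0

/-- `∏_{i=q}^{p} (1 + β x_i)` -/
def prodOneAdd (q p : ℕ) : R := ∏ i ∈ Finset.Icc q p, (1 + bR * Xv i)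

/-- `G_m^{[p/q]} = Σ_{s≥0} (−β)^s (∏_{i=q}^p (1+βx_i)) h_{m+s}(x_q,…,x_p)`,
defined coefficientwise (only the terms with `m + s ≤ deg d` can contribute to the
coefficient at a monomial `d`). -/
def Gsk (p q : ℕ) (m : ℤ) : R := fun d =>
  ∑ s ∈ Finset.range (((degSum d : ℤ) - m).toNat + 1),
    (-Polynomial.X : A) ^ s * MvPowerSeries.coeff (R := A) d (prodOneAdd q p * hsym q p (m + s))

/-- `G_m^{[p]} = G_m^{[p/1]}` -/
def Gk (p : ℕ) (m : ℤ) : R := Gsk p 1 m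

/-- the geometric series `Σ_{s≥0} (−β x_i)^s = 1/(1+βx_i)` -/
def geom (i : ℕ) : R := fun d =>
  if d.support ⊆ {i} then (-Polynomial.X : A) ^ (d i) else 0

/-- substitution of `x₁ = 0` -/
def setX1Zero (f : R) : R := fun d => if d 1 = 0 then f d else 0

/-- generalized binomial coefficient `C(c,s) = c(c−1)⋯(c−s+1)/s!` for `c : ℤ` -/
def intChoose (c : ℤ) (s : ℕ) : ℤ :=
  if 0 ≤ c then (c.toNat.choose s : ℤ) else (-1) ^ s * (((s : ℤ) - 1 - c).toNat.choose s : ℤ)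

/-- `Σ_{s≥0} C(c,s) β^s G_{m+s}^{[p/q]}`, defined coefficientwise. -/
def JT (p q : ℕ) (c m : ℤ) : R := fun d =>
  ∑ s ∈ Finset.range (((degSum d : ℤ) - m).toNat + 1),
    ((intChoose c s : ℤ) : A) * Polynomial.X ^ s * MvPowerSeries.coeff (R := A) d (Gsk p q (m + s))

/-- the Jacobi–Trudi type determinant `G̃_{λ/μ,f/g}` (rows and columns indexed by
`Fin r`, with `i : Fin r` representing the 1-based index `i+1`). -/
def GtildeSkew (r : ℕ) (lam mu f g : Fin r → ℕ) : R :=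
  Matrix.det (Matrix.of fun i j : Fin r =>
    JT (f i) (g j) ((i : ℤ) - (j : ℤ))
      ((lam i : ℤ) - (mu j : ℤ) + (j : ℤ) - (i : ℤ)))

/-- the Jacobi–Trudi type determinant `G̃_{λ,f}` -/
def Gtilde (r : ℕ) (lam f : Fin r → ℕ) : R :=
  GtildeSkew r lam (fun _ => 0) f (fun _ => 1)

/-- flagged skew set-valued tableaux of shape `λ/μ` with flagging `f/g`:
a tableau assigns to the box in row `i` (1-based index `i+1`), column `j`
(with `μᵢ < j ≤ λᵢ`) a nonempty subset of `{gᵢ,…,fᵢ}`, weakly increasing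
along rows and strictly increasing along columns; boxes outside the shape
carry `∅`. -/
def IsFSVT (r : ℕ) (lam mu f g : Fin r → ℕ) (T : Fin r × ℕ → Finset ℕ) : Prop :=
  (∀ (i : Fin r) (j : ℕ), ¬ (mu i < j ∧ j ≤ lam i) → T (i, j) = ∅) ∧
  (∀ (i : Fin r) (j : ℕ), mu i < j → j ≤ lam i → (T (i, j)).Nonempty) ∧
  (∀ (i : Fin r) (j k : ℕ), k ∈ T (i, j) → g i ≤ k ∧ k ≤ f i) ∧
  (∀ (i : Fin r) (j : ℕ), mu i < j → j + 1 ≤ lam i →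
     ∀ a ∈ T (i, j), ∀ b ∈ T (i, j + 1), a ≤ b) ∧
  (∀ (i : Fin r) (h : (i : ℕ) + 1 < r) (j : ℕ),
     mu i < j → j ≤ lam i → mu ⟨(i : ℕ) + 1, h⟩ < j → j ≤ lam ⟨(i : ℕ) + 1, h⟩ →
     ∀ a ∈ T (i, j), ∀ b ∈ T (⟨(i : ℕ) + 1, h⟩, j), a < b)

/-- the total number `|T|` of entries of a tableau -/
def entriesCount (r : ℕ) (lam mu : Fin r → ℕ) (T : Fin r × ℕ → Finset ℕ) : ℕ :=
  ∑ i : Fin r, ∑ j ∈ Finset.Ioc (mu i) (lam i), (T (i, j)).card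

/-- `|λ/μ|` -/
def shapeSize (r : ℕ) (lam mu : Fin r → ℕ) : ℕ := ∑ i : Fin r, (lam i - mu i)

/-- the weight `β^{|T|−|λ/μ|} ∏_{k∈T} x_k` of a tableau -/
def wt (r : ℕ) (lam mu : Fin r → ℕ) (T : Fin r × ℕ → Finset ℕ) : R :=
  bR ^ (entriesCount r lam mu T - shapeSize r lam mu) *
    ∏ i : Fin r, ∏ j ∈ Finset.Ioc (mu i) (lam i), ∏ k ∈ T (i, j), Xv k

/-- the flagged skew Grothendieck polynomial `G_{λ/μ,f/g}` as the (finite) sum of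
the weights of all flagged skew set-valued tableaux -/
def GF (r : ℕ) (lam mu f g : Fin r → ℕ) : R :=
  ∑ᶠ (T : Fin r × ℕ → Finset ℕ) (_ : IsFSVT r lam mu f g T), wt r lam mu T

/- permutations: `w ∈ S_n` is encoded as a permutation of `ℕ` fixing `0` and
everything `> n`. -/

/-- `w` belongs to `S_n` -/
def isSn (n : ℕ) (w : Equiv.Perm ℕ) : Prop := ∀ k, k = 0 ∨ n < k → w k = k

/-- Coxeter length = number of inversions -/
def len (n : ℕ) (w : Equiv.Perm ℕ) : ℕ :=
  (((Finset.Icc 1 n) ×ˢ (Finset.Icc 1 n)).filter fun pr : ℕ × ℕ =>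
    pr.1 < pr.2 ∧ w pr.2 < w pr.1).card

/-- the rank function `r_w(p,q) = #{i ≤ p : w(i) ≤ q}` -/
def rankf (w : Equiv.Perm ℕ) (p q : ℕ) : ℕ :=
  ((Finset.Icc 1 p).filter fun i => w i ≤ q).card

/-- the diagram `D(w)` -/
def inD (n : ℕ) (w : Equiv.Perm ℕ) (p q : ℕ) : Prop :=
  1 ≤ p ∧ p ≤ n ∧ 1 ≤ q ∧ q ≤ n ∧ q < w p ∧ p < w.symm q

/-- the essential set `Ess(w)` -/
def inEss (n : ℕ) (w : Equiv.Perm ℕ) (p q : ℕ) : Prop :=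
  inD n w p q ∧ ¬ inD n w (p+1) q ∧ ¬ inD n w p (q+1)

/-- `w ∈ S_n` is vexillary: it avoids the pattern 2143 -/
def Vexillary (n : ℕ) (w : Equiv.Perm ℕ) : Prop :=
  ¬ ∃ a b c d : ℕ, 1 ≤ a ∧ a < b ∧ b < c ∧ c < d ∧ d ≤ n ∧
      w b < w a ∧ w a < w d ∧ w d < w c

/-!
Split off the variable `x₁`: from `h_j(x₁,…,x_p) = x₁ h_{j-1}(x₁,…,x_p) + h_j(x₂,…,x_p)` and
`∏_{i=1}^p (1+βxᵢ) = (1+βx₁) ∏_{i=2}^p (1+βxᵢ)`, summing over `s` gives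
`G_m^{[p]} = x₁ G_{m-1}^{[p]} + (1+βx₁) G_m^{[p/2]}`. The series `G_m^{[p/2]}` does not involve
`x₁`, so it is `G_m^{[p]}|_{x₁=0}`, and multiplying the recursion by `1/(1+βx₁)` gives the identity.
-/

open MvPowerSeries Finsupp

lemma exists_eq_add_single_of_ne_zero {σ : Type*} {i : σ} {d : σ →₀ ℕ} (hd : d i ≠ 0) :
    ∃ e, d = e + single i 1 :=
  ⟨d - single i 1, (tsub_add_cancel_of_le (single_le_iff.2 (Nat.one_le_iff_ne_zero.2 hd))).symm⟩

lemma support_add_single_one {σ : Type*} (e : σ →₀ ℕ) (i : σ) :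
    (e + single i 1).support = insert i e.support := by
  rw [support_add_eq_union, support_single _ one_ne_zero, Finset.union_comm]
  rfl

namespace MvPowerSeries

section Semiring

variable {σ S : Type*} [Semiring S]

lemma coeff_add_single_X_mul (i : σ) (e : σ →₀ ℕ) (f : MvPowerSeries σ S) :
    coeff (e + single i 1) (X i * f) = coeff e f := by
  rw [X_mul, X_def, coeff_add_mul_monomial, mul_one]

lemma coeff_X_mul_of_eq_zero {i : σ} {d : σ →₀ ℕ} (hd : d i = 0) (f : MvPowerSeries σ S) :
    coeff d (X i * f) = 0 := by
  rw [X_def, coeff_monomial_mul, if_neg]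
  intro h
  simpa [hd] using h i

end Semiring

variable {σ S : Type*} [CommSemiring S]

def freeOfVar (i : σ) : Subalgebra S (MvPowerSeries σ S) where
  carrier := {f | ∀ d : σ →₀ ℕ, d i ≠ 0 → coeff d f = 0}
  mul_mem' {f g} hf hg d hd := by
    rw [coeff_mul]
    refine Finset.sum_eq_zero fun x hx => ?_
    have hx' : x.1 i + x.2 i = d i := by
      rw [← Finset.HasAntidiagonal.mem_antidiagonal.1 hx]; rfl
    by_cases h1 : x.1 i = 0
    · rw [hg x.2 (by omega), mul_zero]
    · rw [hf x.1 h1, zero_mul]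
  add_mem' {f g} hf hg d hd := by rw [map_add, hf d hd, hg d hd, add_zero]
  algebraMap_mem' a d hd := by
    rw [algebraMap_apply, Algebra.algebraMap_self, RingHom.id_apply, coeff_C, if_neg]
    rintro rfl
    exact hd rfl

lemma X_mem_freeOfVar {i j : σ} (h : j ≠ i) : X j ∈ freeOfVar (S := S) i := by
  intro d hd
  rw [coeff_X, if_neg]
  rintro rfl
  simp [h] at hd

end MvPowerSeries

lemma degSum_eq_degree (d : ℕ →₀ ℕ) : degSum d = d.degree := rfl

lemma degSum_add_single (e : ℕ →₀ ℕ) (i : ℕ) : degSum (e + single i 1) = degSum e + 1 := by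
  simp only [degSum_eq_degree, map_add, degree_single]

lemma degSum_mono : Monotone degSum := degree_mono

lemma coeff_hsym (q p : ℕ) (j : ℤ) (d : ℕ →₀ ℕ) :
    coeff d (hsym q p j) = if d.support ⊆ Finset.Icc q p ∧ (degSum d : ℤ) = j then 1 else 0 := by
  simp only [Finset.subset_iff, Finset.mem_Icc]
  rfl

lemma coeff_mul_hsym_of_lt (f : R) (q p : ℕ) {j : ℤ} {d : ℕ →₀ ℕ} (hd : (degSum d : ℤ) < j) :
    coeff d (f * hsym q p j) = 0 := by
  rw [coeff_mul]
  refine Finset.sum_eq_zero fun x hx => ?_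
  have hx2 : degSum x.2 ≤ degSum d :=
    degSum_mono (Finset.HasAntidiagonal.mem_antidiagonal.1 hx ▸ le_add_self)
  rw [coeff_hsym, if_neg (by omega), mul_zero]

lemma hsym_eq_X_mul_add {q p : ℕ} (hq : q ≤ p) (j : ℤ) :
    hsym q p j = Xv q * hsym q p (j - 1) + hsym (q + 1) p j := by
  have hIcc : Finset.Icc q p = insert q (Finset.Icc (q + 1) p) :=
    (Finset.insert_Icc_add_one_left_eq_Icc hq).symm
  ext d : 1
  rw [map_add, Xv]
  by_cases hd : d q = 0
  · have hsupp : d.support ⊆ Finset.Icc q p ↔ d.support ⊆ Finset.Icc (q + 1) p := by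
      rw [hIcc, Finset.subset_insert_iff_of_notMem (notMem_support_iff.2 hd)]
    simp only [coeff_X_mul_of_eq_zero hd, zero_add, coeff_hsym, hsupp]
  · obtain ⟨e, rfl⟩ := exists_eq_add_single_of_ne_zero hd
    have hdeg : ((degSum (e + single q 1) : ℕ) : ℤ) = j ↔ (degSum e : ℤ) = j - 1 := by
      rw [degSum_add_single]; omega
    simp only [coeff_add_single_X_mul, coeff_hsym, support_add_single_one, hdeg,
      Finset.insert_subset_iff, hIcc, Finset.mem_insert, true_or, true_and, Finset.mem_Icc,
      add_le_iff_nonpos_right, nonpos_iff_eq_zero, one_ne_zero, false_and, if_false, add_zero]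

lemma prodOneAdd_eq_mul {q p : ℕ} (hq : q ≤ p) :
    prodOneAdd q p = (1 + bR * Xv q) * prodOneAdd (q + 1) p := by
  rw [prodOneAdd, prodOneAdd, ← Finset.insert_Icc_add_one_left_eq_Icc hq,
    Finset.prod_insert (by simp)]

-- `Gsk` truncates its sum at the degree of the monomial; any longer range gives the same
-- coefficient, since `h_{m+s}` has no monomial of degree `< m + s`.
lemma coeff_Gsk_eq_sum_range (p q : ℕ) (m : ℤ) {d : ℕ →₀ ℕ} {N : ℕ}
    (hN : ((degSum d : ℤ) - m).toNat + 1 ≤ N) :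
    coeff d (Gsk p q m) = ∑ s ∈ Finset.range N,
      (-Polynomial.X : A) ^ s * coeff d (prodOneAdd q p * hsym q p (m + s)) := by
  refine Finset.sum_subset (Finset.range_subset_range.2 hN) fun s _ hs => ?_
  rw [coeff_mul_hsym_of_lt _ _ _ (by simp at hs; omega), mul_zero]

lemma coeff_mul_Gsk_eq_sum_range (g : R) (p q : ℕ) (m : ℤ) {d : ℕ →₀ ℕ} {N : ℕ}
    (hN : ((degSum d : ℤ) - m).toNat + 1 ≤ N) :
    coeff d (g * Gsk p q m) = ∑ s ∈ Finset.range N,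
      (-Polynomial.X : A) ^ s * coeff d (g * (prodOneAdd q p * hsym q p (m + s))) := by
  classical
  have hGsk : ∀ x ∈ Finset.HasAntidiagonal.antidiagonal d, coeff x.1 g * coeff x.2 (Gsk p q m) =
      ∑ s ∈ Finset.range N, (-Polynomial.X : A) ^ s *
        (coeff x.1 g * coeff x.2 (prodOneAdd q p * hsym q p (m + s))) := fun x hx => by
    have hx2 : degSum x.2 ≤ degSum d :=
      degSum_mono (Finset.HasAntidiagonal.mem_antidiagonal.1 hx ▸ le_add_self)
    rw [coeff_Gsk_eq_sum_range p q m (N := N) (by omega), Finset.mul_sum]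
    exact Finset.sum_congr rfl fun s _ => by ring
  rw [coeff_mul, Finset.sum_congr rfl hGsk, Finset.sum_comm]
  simp only [coeff_mul (n := d), Finset.mul_sum]

lemma Gsk_eq_X_mul_add {q p : ℕ} (hq : q ≤ p) (m : ℤ) :
    Gsk p q m = Xv q * Gsk p q (m - 1) + (1 + bR * Xv q) * Gsk p (q + 1) m := by
  ext d : 1
  have hN : ((degSum d : ℤ) - m).toNat + 1 ≤ ((degSum d : ℤ) - m).toNat + 2 := by omega
  rw [map_add, coeff_Gsk_eq_sum_range p q m hN,
    coeff_mul_Gsk_eq_sum_range _ p q (m - 1) (N := ((degSum d : ℤ) - m).toNat + 2) (by omega),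
    coeff_mul_Gsk_eq_sum_range _ p (q + 1) m hN, ← Finset.sum_add_distrib]
  refine Finset.sum_congr rfl fun s _ => ?_
  rw [← mul_add, ← map_add, hsym_eq_X_mul_add hq, prodOneAdd_eq_mul hq,
    show m - 1 + s = m + s - 1 by ring]
  congr 2
  ring

lemma hsym_mem_freeOfVar {i q p : ℕ} (hi : i ∉ Finset.Icc q p) (j : ℤ) :
    hsym q p j ∈ freeOfVar i := by
  intro d hd
  rw [coeff_hsym, if_neg]
  rintro ⟨hsupp, -⟩
  exact hi (hsupp (mem_support_iff.2 hd))

lemma prodOneAdd_mem_freeOfVar {i q p : ℕ} (hi : i ∉ Finset.Icc q p) :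
    prodOneAdd q p ∈ freeOfVar i := by
  refine prod_mem fun k hk => add_mem (one_mem _) (mul_mem (algebraMap_mem _ _) ?_)
  exact X_mem_freeOfVar (ne_of_mem_of_not_mem hk hi)

lemma Gsk_mem_freeOfVar {i q p : ℕ} (hi : i ∉ Finset.Icc q p) (m : ℤ) :
    Gsk p q m ∈ freeOfVar i := by
  intro d hd
  rw [coeff_Gsk_eq_sum_range p q m le_rfl]
  refine Finset.sum_eq_zero fun s _ => ?_
  rw [mul_mem (prodOneAdd_mem_freeOfVar hi) (hsym_mem_freeOfVar hi _) d hd, mul_zero]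

lemma coeff_setX1Zero (f : R) (d : ℕ →₀ ℕ) :
    coeff d (setX1Zero f) = if d 1 = 0 then coeff d f else 0 := rfl

lemma setX1Zero_of_mem_freeOfVar {f : R} (hf : f ∈ freeOfVar 1) : setX1Zero f = f := by
  ext d : 1
  rw [coeff_setX1Zero]
  split_ifs with hd
  · rfl
  · exact (hf d hd).symm

lemma setX1Zero_X_one_mul_add (f g : R) : setX1Zero (Xv 1 * f + g) = setX1Zero g := by
  ext d : 1
  rw [coeff_setX1Zero, coeff_setX1Zero]
  split_ifs with hd
  · rw [map_add, Xv, coeff_X_mul_of_eq_zero hd, zero_add]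
  · rfl

lemma coeff_geom (i : ℕ) (d : ℕ →₀ ℕ) :
    coeff d (geom i) = if d.support ⊆ {i} then (-Polynomial.X : A) ^ d i else 0 := rfl

lemma geom_mul_one_add (i : ℕ) : geom i * (1 + bR * Xv i) = 1 := by
  rw [show geom i * (1 + bR * Xv i) = geom i + bR * (Xv i * geom i) by ring]
  ext d : 1
  rw [map_add, bR, coeff_C_mul, Xv, coeff_one, coeff_geom]
  by_cases hd : d i = 0
  · have hsupp : d.support ⊆ {i} ↔ d = 0 := by
      rw [support_subset_singleton, hd, single_zero]
    rw [coeff_X_mul_of_eq_zero hd, mul_zero, add_zero]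
    simp only [hsupp]
    split_ifs with h
    · rw [h, coe_zero, Pi.zero_apply, pow_zero]
    · rfl
  · obtain ⟨e, rfl⟩ := exists_eq_add_single_of_ne_zero hd
    rw [coeff_add_single_X_mul, coeff_geom, if_neg (ne_of_apply_ne (· i) (by simp))]
    simp only [support_add_single_one, Finset.insert_subset_iff, Finset.mem_singleton_self,
      true_and, coe_add, Pi.add_apply, single_eq_same]
    split_ifs <;> ring

theorem stmt4 (m : ℤ) (p : ℕ) (hp : 1 ≤ p) :
    Gk p m - (Xv 1 * geom 1) * Gk p (m-1) - (Xv 1 * geom 1) * (bR * Gk p m)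
      = setX1Zero (Gk p m) := by
  have hrec : Gk p m = Xv 1 * Gk p (m - 1) + (1 + bR * Xv 1) * Gsk p 2 m :=
    Gsk_eq_X_mul_add hp m
  have hzero : setX1Zero (Gk p m) = Gsk p 2 m := by
    rw [hrec, show Xv 1 * Gk p (m - 1) + (1 + bR * Xv 1) * Gsk p 2 m
        = Xv 1 * (Gk p (m - 1) + bR * Gsk p 2 m) + Gsk p 2 m by ring,
      setX1Zero_X_one_mul_add, setX1Zero_of_mem_freeOfVar (Gsk_mem_freeOfVar (by simp) m)]
  rw [hzero]
  linear_combination geom 1 * hrec + (Gsk p 2 m - Gk p m) * geom_mul_one_add 1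

end
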